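/- arXiv:1810.04857 — 5 statements merged into one kernel-verified Lean document; each statement's English description precedes it below -/
import Mathlib

section
/- With a₀,…,a₃ and g₀,…,g₃ as in the tetrahedron setup, the following identity of linear maps on ℝ³ holds: ∑_{0 ≤ i < j ≤ 3} (−⟨gᵢ, gⱼ⟩) · ((aⱼ − aᵢ) ⊗ (aⱼ − aᵢ)) = Id_{ℝ³}. (Lemma 4.4: in the paper's notation this is I = ∑_{E ∈ 𝒮_T¹} ω_E^T (|E|²/|T|) τ_E τ_Eᵀ, where for the edge E from aᵢ to aⱼ one has ω_E^T = −∫_T ⟨∇λᵢ, ∇λⱼ⟩ = −|T|⟨gᵢ,gⱼ⟩, |E| = ‖aⱼ−aᵢ‖, and τ_E = (aⱼ−aᵢ)/‖aⱼ−aᵢ‖.) -/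
/-!
The barycentric coordinates `λᵢ x = ⟨gᵢ, x⟩ + cᵢ` satisfy `λᵢ aⱼ = δᵢⱼ`, i.e. the square matrices
`[g | c]` and `[a | 1]ᵀ` are inverse to each other. Multiplying them in the other order gives
`∑ᵢ aᵢ ⊗ gᵢ = I` and `∑ᵢ gᵢ = 0`. The latter says that `W = (-⟨gᵢ, gⱼ⟩)` has zero row sums, and for
such a symmetric `W` expanding the squares gives `∑_{i<j} Wᵢⱼ (aⱼ - aᵢ) ⊗ (aⱼ - aᵢ) = -AᵀWA`,
which here is `(∑ᵢ aᵢ ⊗ gᵢ)(∑ᵢ aᵢ ⊗ gᵢ)ᵀ = I`.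
-/

open Matrix Finset

theorem Finset.sum_sum_eq_two_nsmul_sum_sum_lt {ι M : Type*} [Fintype ι] [LinearOrder ι]
    [AddCommMonoid M] (F : ι → ι → M) (hF : ∀ i j, F i j = F j i) (hdiag : ∀ i, F i i = 0) :
    ∑ i, ∑ j, F i j = 2 • ∑ i, ∑ j, if i < j then F i j else 0 := by
  have hsplit (i j : ι) :
      F i j = (if i < j then F i j else 0) + if j < i then F j i else 0 := by
    rcases lt_trichotomy i j with h | rfl | h
    · simp [h, h.not_gt]
    · simp [hdiag]
    · simp [h, h.not_gt, hF i j]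
  calc ∑ i, ∑ j, F i j
      = ∑ i, ∑ j, ((if i < j then F i j else 0) + if j < i then F j i else 0) := by
        simp only [← hsplit]
    _ = 2 • ∑ i, ∑ j, if i < j then F i j else 0 := by
        rw [two_nsmul]
        simp only [sum_add_distrib]
        exact congrArg _ sum_comm

namespace Matrix

variable {ι n : Type*} [Fintype ι]

theorem sum_sum_mul_sub_mul_sub {R : Type*} [CommRing R] (W : Matrix ι ι R)
    (hrow : W *ᵥ 1 = 0) (hcol : 1 ᵥ* W = 0) (x y : ι → R) :
    ∑ i, ∑ j, W i j * ((x j - x i) * (y j - y i)) = -(x ⬝ᵥ W *ᵥ y + y ⬝ᵥ W *ᵥ x) := by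
  have hrow_sum (i : ι) : ∑ j, W i j = 0 := by simpa [mulVec, dotProduct] using congrFun hrow i
  have hcol_sum (j : ι) : ∑ i, W i j = 0 := by simpa [vecMul, dotProduct] using congrFun hcol j
  have hjj : ∑ i, ∑ j, W i j * (x j * y j) = 0 := by
    rw [sum_comm]
    simp [← sum_mul, hcol_sum]
  have hii : ∑ i, ∑ j, W i j * (x i * y i) = 0 := by
    simp [← sum_mul, hrow_sum]
  have hij : ∑ i, ∑ j, W i j * (x i * y j) = x ⬝ᵥ W *ᵥ y := by
    simp only [dotProduct, mulVec, mul_sum]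
    exact sum_congr rfl fun i _ => sum_congr rfl fun j _ => by ring
  have hji : ∑ i, ∑ j, W i j * (x j * y i) = y ⬝ᵥ W *ᵥ x := by
    simp only [dotProduct, mulVec, mul_sum]
    exact sum_congr rfl fun i _ => sum_congr rfl fun j _ => by ring
  have hexpand (i j : ι) : W i j * ((x j - x i) * (y j - y i)) =
      W i j * (x j * y j) + W i j * (x i * y i) - W i j * (x i * y j) - W i j * (x j * y i) := by
    ring
  simp only [hexpand, sum_sub_distrib, sum_add_distrib, hjj, hii, hij, hji]
  ring

theorem sum_sum_smul_vecMulVec_sub {R : Type*} [CommRing R] (W : Matrix ι ι R)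
    (hrow : W *ᵥ 1 = 0) (hcol : 1 ᵥ* W = 0) (x : Matrix ι n R) :
    ∑ i, ∑ j, W i j • vecMulVec (x j - x i) (x j - x i) = -(xᵀ * W * x + (xᵀ * W * x)ᵀ) := by
  have hquad (r c : n) : (fun i => x i r) ⬝ᵥ W *ᵥ (fun i => x i c) = (xᵀ * W * x) r c := by
    rw [Matrix.mul_assoc]
    simp [mul_apply, dotProduct, mulVec]
  ext r c
  simp only [sum_apply, smul_apply, vecMulVec_apply, Pi.sub_apply, smul_eq_mul,
    sum_sum_mul_sub_mul_sub W hrow hcol, hquad, neg_apply, add_apply, transpose_apply]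

theorem sum_sum_lt_smul_vecMulVec_sub {K : Type*} [Field K] [NeZero (2 : K)] [LinearOrder ι]
    (W : Matrix ι ι K) (hW : W.IsSymm) (hrow : W *ᵥ 1 = 0) (x : Matrix ι n K) :
    (∑ i, ∑ j, if i < j then W i j • vecMulVec (x j - x i) (x j - x i) else 0) =
      -(xᵀ * W * x) := by
  have hcol : 1 ᵥ* W = 0 := by rwa [← mulVec_transpose, hW.eq]
  have hsymm : (xᵀ * W * x)ᵀ = xᵀ * W * x := by
    rw [transpose_mul, transpose_mul, transpose_transpose, hW.eq, Matrix.mul_assoc]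
  have hF (i j : ι) : W i j • vecMulVec (x j - x i) (x j - x i) =
      W j i • vecMulVec (x i - x j) (x i - x j) := by
    rw [hW.apply, ← neg_sub, neg_vecMulVec, vecMulVec_neg, neg_neg]
  have htotal := sum_sum_smul_vecMulVec_sub W hrow hcol x
  rw [Finset.sum_sum_eq_two_nsmul_sum_sum_lt _ hF (by simp), hsymm, ← two_nsmul, ← smul_neg,
    ← Nat.cast_smul_eq_nsmul K, ← Nat.cast_smul_eq_nsmul K] at htotal
  exact smul_right_injective _ (by simpa using two_ne_zero) htotal

end Matrix

section Barycentric

variable {ι n R : Type*} [Fintype ι] [DecidableEq ι] [Fintype n] [DecidableEq n] [CommRing R]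

def IsBarycentricGradients (a g : ι → n → R) : Prop :=
  ∀ i j k, g i ⬝ᵥ (a j - a k) = (if i = j then 1 else 0) - (if i = k then 1 else 0)

namespace IsBarycentricGradients

variable {a g : ι → n → R}

theorem exists_fromRows_mul_fromCols_eq_one (hcard : Fintype.card ι = Fintype.card n + 1)
    (hg : IsBarycentricGradients a g) :
    ∃ c : Matrix ι Unit R,
      fromRows (of a)ᵀ (of fun _ _ => 1) * fromCols (of g) c = (1 : Matrix (n ⊕ Unit) _ R) := by
  obtain ⟨k⟩ : Nonempty ι := Fintype.card_pos_iff.mp (by omega)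
  let c : Matrix ι Unit R := of fun i _ => (if i = k then 1 else 0) - g i ⬝ᵥ a k
  refine ⟨c, (fromCols_mul_fromRows_eq_one_comm
    (Fintype.equivOfCardEq (by simp [hcard])) _ _ _ _).mp ?_⟩
  rw [fromCols_mul_fromRows]
  ext i j
  have hij := hg i j k
  rw [dotProduct_sub] at hij
  simp only [Matrix.add_apply, mul_apply, c, of_apply, transpose_apply, Fintype.sum_unique,
    mul_one, one_apply]
  change g i ⬝ᵥ a j + _ = _
  linear_combination hij

theorem transpose_mul_eq_one (hcard : Fintype.card ι = Fintype.card n + 1)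
    (hg : IsBarycentricGradients a g) : (of a)ᵀ * of g = 1 := by
  obtain ⟨c, hc⟩ := hg.exists_fromRows_mul_fromCols_eq_one hcard
  rw [fromRows_mul_fromCols, ← fromBlocks_one, fromBlocks_inj] at hc
  exact hc.1

theorem one_vecMul_eq_zero (hcard : Fintype.card ι = Fintype.card n + 1)
    (hg : IsBarycentricGradients a g) : 1 ᵥ* of g = 0 := by
  obtain ⟨c, hc⟩ := hg.exists_fromRows_mul_fromCols_eq_one hcard
  rw [fromRows_mul_fromCols, ← fromBlocks_one, fromBlocks_inj] at hc
  funext p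
  simpa [mul_apply, vecMul, dotProduct] using congrFun (congrFun hc.2.2.1 ()) p

end IsBarycentricGradients

end Barycentric

theorem stmt_3_general (a : Fin 4 → Fin 3 → ℝ) (g : Fin 4 → Fin 3 → ℝ)
    (hg : ∀ i j k : Fin 4, ∑ m, g i m * (a j m - a k m) =
      (if i = j then (1 : ℝ) else 0) - (if i = k then (1 : ℝ) else 0)) :
    (∑ i : Fin 4, ∑ j : Fin 4,
        if i < j then
          (-(∑ m, g i m * g j m)) • Matrix.vecMulVec (a j - a i) (a j - a i)
        else 0) = (1 : Matrix (Fin 3) (Fin 3) ℝ) := by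
  have hAG := IsBarycentricGradients.transpose_mul_eq_one (by simp) hg
  have hG := IsBarycentricGradients.one_vecMul_eq_zero (by simp) hg
  have hsymm : (-(of g * (of g)ᵀ)).IsSymm := by
    simp [IsSymm, transpose_mul]
  have hrow : -(of g * (of g)ᵀ) *ᵥ 1 = 0 := by
    rw [neg_mulVec, ← mulVec_mulVec, mulVec_transpose, hG, mulVec_zero, neg_zero]
  calc _ = -((of a)ᵀ * -(of g * (of g)ᵀ) * of a) :=
        sum_sum_lt_smul_vecMulVec_sub _ hsymm hrow (of a)
    _ = ((of a)ᵀ * of g) * ((of a)ᵀ * of g)ᵀ := by simp [Matrix.mul_assoc, transpose_mul]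
    _ = 1 := by rw [hAG, transpose_one, Matrix.one_mul]

/-- Lemma 4.4: for a nondegenerate tetrahedron with vertices `a 0, …, a 3`
and barycentric gradient vectors `g 0, …, g 3` (characterized by
`⟨g i, a j − a k⟩ = δᵢⱼ − δᵢₖ`), one has
`∑_{i<j} (−⟨gᵢ,gⱼ⟩) (aⱼ−aᵢ)(aⱼ−aᵢ)ᵀ = I` as linear maps (matrices) on `ℝ³`,
where `v ⊗ w` is realized by the rank-one matrix `Matrix.vecMulVec v w`, whose action is
`x ↦ ⟨w, x⟩ · v`. -/
theorem stmt_3 (a : Fin 4 → Fin 3 → ℝ) (g : Fin 4 → Fin 3 → ℝ)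
    (ha : AffineIndependent ℝ a)
    (hg : ∀ i j k : Fin 4, ∑ m, g i m * (a j m - a k m) =
      (if i = j then (1 : ℝ) else 0) - (if i = k then (1 : ℝ) else 0)) :
    (∑ i : Fin 4, ∑ j : Fin 4,
        if i < j then
          (-(∑ m, g i m * g j m)) • Matrix.vecMulVec (a j - a i) (a j - a i)
        else 0) = (1 : Matrix (Fin 3) (Fin 3) ℝ) :=
  stmt_3_general a g hg
end

section
/- Let ε > 0 and s, t ∈ ℝ with s ≠ 0, t ≠ 0 and s ≠ t. Then s·exp(t/ε) − t·exp(s/ε) + t − s ≠ 0, and the two-dimensional Bernoulli function B₂^ε(s,t) := ε · (∫₀¹ exp(s·x/ε) dx) / (2 ∬_{Δ₂} exp((s·x₁ + t·x₂)/ε) dx₁ dx₂) satisfies the closed-form identity B₂^ε(s,t) = t·(t − s)·(exp(s/ε) − 1) / (2·(s·exp(t/ε) − t·exp(s/ε) + t − s)). (Closed form of the Bernoulli function B₂^ε from equations (A.1b) and (A.3).) -/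
/-!
Writing `a = s/ε`, `b = t/ε`, Fubini turns the integral of `exp (a x₁ + b x₂)` over the unit
simplex into `∫₀¹ ∫₀^{1-x₁}`, and both iterated integrals are elementary exponential integrals; this
gives the value `(a eᵇ - b eᵃ + b - a) / (a b (b - a))`. Since the integrand is positive and the
simplex has positive area, the numerator cannot vanish, and the identity is then field arithmetic.
-/

open MeasureTheory Real Set

theorem intervalIntegral.integral_exp_mul_add {c : ℝ} (hc : c ≠ 0) (d a b : ℝ) :
    ∫ y in a..b, exp (c * y + d) = (exp (c * b + d) - exp (c * a + d)) / c := by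
  rw [intervalIntegral.integral_comp_mul_add (fun x => exp x) hc, integral_exp, smul_eq_mul,
    inv_mul_eq_div]

theorem integral_Icc_exp_mul {a : ℝ} (ha : a ≠ 0) :
    ∫ x in Icc (0 : ℝ) 1, exp (a * x) = (exp a - 1) / a := by
  rw [integral_Icc_eq_integral_Ioc, ← intervalIntegral.integral_of_le zero_le_one]
  simpa using intervalIntegral.integral_exp_mul_add ha 0 0 1

theorem setIntegral_prod_eq_integral_setIntegral_preimage {α β E : Type*} [MeasurableSpace α]
    [MeasurableSpace β] [NormedAddCommGroup E] [NormedSpace ℝ E] {μ : Measure α} {ν : Measure β}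
    [SFinite μ] [SFinite ν] {S : Set (α × β)} (hS : MeasurableSet S) {f : α × β → E}
    (hf : IntegrableOn f S (μ.prod ν)) :
    ∫ p in S, f p ∂μ.prod ν = ∫ x, ∫ y in Prod.mk x ⁻¹' S, f (x, y) ∂ν ∂μ := by
  rw [← integral_indicator hS, integral_prod _ ((integrable_indicator_iff hS).2 hf)]
  congr 1 with x
  rw [← integral_indicator (measurable_prodMk_left hS)]
  rfl

def unitSimplex : Set (ℝ × ℝ) := {p | 0 ≤ p.1 ∧ 0 ≤ p.2 ∧ p.1 + p.2 ≤ 1}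

theorem measurableSet_unitSimplex : MeasurableSet unitSimplex := by
  unfold unitSimplex; measurability

theorem isCompact_unitSimplex : IsCompact unitSimplex := by
  refine (isCompact_Icc (a := ((0 : ℝ), (0 : ℝ))) (b := (1, 1))).of_isClosed_subset ?_ ?_
  · exact (isClosed_le continuous_const continuous_fst).inter
      ((isClosed_le continuous_const continuous_snd).inter
        (isClosed_le (continuous_fst.add continuous_snd) continuous_const))
  · rintro ⟨x, y⟩ ⟨hx, hy, hxy⟩
    exact ⟨⟨hx, hy⟩, by dsimp at *; linarith, by dsimp at *; linarith⟩

theorem volume_unitSimplex_pos : 0 < volume unitSimplex := by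
  have hsub : Ioo (0 : ℝ) (1 / 2) ×ˢ Ioo (0 : ℝ) (1 / 2) ⊆ unitSimplex := by
    rintro ⟨x, y⟩ ⟨⟨hx, hx'⟩, hy, hy'⟩
    exact ⟨hx.le, hy.le, by dsimp at *; linarith⟩
  refine lt_of_lt_of_le ?_ (measure_mono hsub)
  exact (isOpen_Ioo.prod isOpen_Ioo).measure_pos volume ⟨(1 / 4, 1 / 4), by norm_num⟩

theorem Continuous.integrableOn_unitSimplex {E : Type*} [NormedAddCommGroup E] {f : ℝ × ℝ → E}
    (hf : Continuous f) : IntegrableOn f unitSimplex :=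
  hf.continuousOn.integrableOn_compact isCompact_unitSimplex

theorem setIntegral_unitSimplex {E : Type*} [NormedAddCommGroup E] [NormedSpace ℝ E]
    {f : ℝ × ℝ → E} (hf : IntegrableOn f unitSimplex) :
    ∫ p in unitSimplex, f p = ∫ x in 0..1, ∫ y in 0..1 - x, f (x, y) := by
  rw [Measure.volume_eq_prod, setIntegral_prod_eq_integral_setIntegral_preimage
      measurableSet_unitSimplex (by rwa [← Measure.volume_eq_prod]),
    intervalIntegral.integral_of_le zero_le_one, ← integral_Icc_eq_integral_Ioc,
    ← integral_indicator measurableSet_Icc]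
  congr 1 with x
  by_cases hx : x ∈ Icc (0 : ℝ) 1
  · have hsection : Prod.mk x ⁻¹' unitSimplex = Icc 0 (1 - x) := by
      ext y
      simp only [unitSimplex, mem_preimage, mem_ofPred_eq, mem_Icc]
      grind
    rw [indicator_of_mem hx, hsection, integral_Icc_eq_integral_Ioc,
      intervalIntegral.integral_of_le (by linarith [hx.2])]
  · have hsection : Prod.mk x ⁻¹' unitSimplex = ∅ := by
      ext y
      simp only [unitSimplex, mem_preimage, mem_ofPred_eq, mem_empty_iff_false, iff_false]
      grind
    rw [indicator_of_notMem hx, hsection, Measure.restrict_empty, integral_zero_measure]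

theorem integral_exp_unitSimplex {a b : ℝ} (ha : a ≠ 0) (hb : b ≠ 0) (hab : a ≠ b) :
    ∫ p in unitSimplex, exp (a * p.1 + b * p.2) =
      (a * exp b - b * exp a + b - a) / (a * b * (b - a)) := by
  have hinner (x : ℝ) : ∫ y in 0..1 - x, exp (a * x + b * y) =
      (exp ((a - b) * x + b) - exp (a * x + 0)) / b := by
    simp_rw [add_comm (a * x)]
    rw [intervalIntegral.integral_exp_mul_add hb]
    congr 3 <;> ring
  rw [setIntegral_unitSimplex
    (by fun_prop : Continuous fun p : ℝ × ℝ => exp (a * p.1 + b * p.2)).integrableOn_unitSimplex]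
  simp_rw [hinner]
  rw [intervalIntegral.integral_div, intervalIntegral.integral_sub
    ((by fun_prop : Continuous _).intervalIntegrable _ _)
    ((by fun_prop : Continuous _).intervalIntegrable _ _),
    intervalIntegral.integral_exp_mul_add (sub_ne_zero.2 hab),
    intervalIntegral.integral_exp_mul_add ha]
  have hba : b - a ≠ 0 := sub_ne_zero.2 hab.symm
  simp only [mul_zero, mul_one, zero_add, add_zero, sub_add_cancel, exp_zero]
  field_simp
  ring

theorem mul_exp_sub_mul_exp_add_sub_ne_zero {a b : ℝ} (ha : a ≠ 0) (hb : b ≠ 0) (hab : a ≠ b) :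
    a * exp b - b * exp a + b - a ≠ 0 := by
  intro h
  have hpos : 0 < ∫ p in unitSimplex, exp (a * p.1 + b * p.2) := by
    rw [setIntegral_pos_iff_support_of_nonneg_ae (.of_forall fun p => (exp_pos _).le)
      (by fun_prop : Continuous fun p : ℝ × ℝ => exp (a * p.1 + b * p.2)).integrableOn_unitSimplex]
    simpa [Function.support, exp_ne_zero] using volume_unitSimplex_pos
  rw [integral_exp_unitSimplex ha hb hab, h, zero_div] at hpos
  exact hpos.false

/-- closed form of the 2D Bernoulli function, (A.1b)/(A.3):
for `ε > 0`, `s ≠ 0`, `t ≠ 0`, `s ≠ t`, one has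
`s e^{t/ε} − t e^{s/ε} + t − s ≠ 0` and
`B₂^ε(s,t) = ε (∫₀¹ e^{sx/ε} dx) / (2 ∬_{Δ₂} e^{(s x₁ + t x₂)/ε})
           = t (t−s)(e^{s/ε} − 1) / (2 (s e^{t/ε} − t e^{s/ε} + t − s))`,
where `Δ₂` is the unit 2-simplex. -/
theorem stmt_9 (ε s t : ℝ) (hε : 0 < ε) (hs : s ≠ 0) (ht : t ≠ 0) (hst : s ≠ t) :
    s * Real.exp (t / ε) - t * Real.exp (s / ε) + t - s ≠ 0 ∧
    ε * (∫ x in Set.Icc (0 : ℝ) 1, Real.exp (s * x / ε)) /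
        (2 * ∫ p in {p : ℝ × ℝ | 0 ≤ p.1 ∧ 0 ≤ p.2 ∧ p.1 + p.2 ≤ 1},
          Real.exp ((s * p.1 + t * p.2) / ε)) =
      t * (t - s) * (Real.exp (s / ε) - 1) /
        (2 * (s * Real.exp (t / ε) - t * Real.exp (s / ε) + t - s)) := by
  have hε0 : ε ≠ 0 := hε.ne'
  have ha : s / ε ≠ 0 := div_ne_zero hs hε0
  have hb : t / ε ≠ 0 := div_ne_zero ht hε0
  have hab : s / ε ≠ t / ε := fun h => hst ((div_left_inj' hε0).1 h)
  have hscale : s * exp (t / ε) - t * exp (s / ε) + t - s =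
      ε * (s / ε * exp (t / ε) - t / ε * exp (s / ε) + t / ε - s / ε) := by
    field_simp
  have h1 : ∫ x in Icc (0 : ℝ) 1, exp (s * x / ε) = (exp (s / ε) - 1) / (s / ε) := by
    simp_rw [mul_div_right_comm s]
    exact integral_Icc_exp_mul ha
  have h2 : ∫ p in unitSimplex, exp ((s * p.1 + t * p.2) / ε) =
      (s / ε * exp (t / ε) - t / ε * exp (s / ε) + t / ε - s / ε) /
        (s / ε * (t / ε) * (t / ε - s / ε)) := by
    simp_rw [add_div, mul_div_right_comm s, mul_div_right_comm t]
    exact integral_exp_unitSimplex ha hb hab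
  have hN := mul_exp_sub_mul_exp_add_sub_ne_zero ha hb hab
  refine ⟨hscale ▸ mul_ne_zero hε0 hN, ?_⟩
  rw [h1, show {p : ℝ × ℝ | 0 ≤ p.1 ∧ 0 ≤ p.2 ∧ p.1 + p.2 ≤ 1} = unitSimplex from rfl, h2, hscale]
  have hba : t / ε - s / ε ≠ 0 := sub_ne_zero.2 hab.symm
  field_simp
end

section
/- Let ε > 0 and s, t, r ∈ ℝ be pairwise distinct and all nonzero. Set Δ := s·t·(t−s)·exp(r/ε) + s·r·(s−r)·exp(t/ε) + r·t·(r−t)·exp(s/ε) + (t−s)·(s−r)·(r−t). Then Δ ≠ 0, and the three-dimensional Bernoulli function B₃^ε(s,t,r) := ε · (2 ∬_{Δ₂} exp((s·x₁ + t·x₂)/ε) dx₁ dx₂) / (6 ∭_{Δ₃} exp((s·x₁ + t·x₂ + r·x₃)/ε) dx₁ dx₂ dx₃) satisfies the closed-form identity B₃^ε(s,t,r) = −r·(s−r)·(r−t)·(s·exp(t/ε) − t·exp(s/ε) + t − s) / (3·Δ). (Closed form of the Bernoulli function B₃^ε from equations (A.1c) and (A.4).) -/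
/-!
Slicing along the first coordinate writes the integral over the scaled simplex
`{x ≥ 0, x₁ + ⋯ + xₙ ≤ u}` as `∫₀ᵘ e^{a x} (integral over the (n-1)-simplex of size u - x) dx`,
and `∫₀ᵘ e^{a x} e^{b (u - x)} dx = (e^{au} - e^{bu}) / (a - b)`. Two such steps give the
divided-difference closed forms
`∫_{Δ₂(u)} e^{a x + b y} = (b e^{au} - a e^{bu} + a - b) / (a b (a - b))` and
`∫_{Δ₃(u)} e^{a x + b y + c z} = Δ(a, b, c) / (a b c (a - b) (b - c) (c - a))`.
The second integral is positive, so `Δ(s/ε, t/ε, r/ε) = ε⁻³ Δ(s, t, r)` cannot vanish, and the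
identity for `B₃^ε` is then a rational identity in `s, t, r, ε` and the three exponentials.
-/

open MeasureTheory Real Set

theorem intervalIntegral_exp_mul {k : ℝ} (hk : k ≠ 0) (v : ℝ) :
    ∫ x in 0..v, exp (k * x) = (exp (k * v) - 1) / k := by
  rw [intervalIntegral.integral_comp_mul_left (fun x => exp x) hk, integral_exp, mul_zero,
    exp_zero, smul_eq_mul, inv_mul_eq_div]

theorem intervalIntegral_exp_mul_mul_exp_mul_sub {a b : ℝ} (hab : a ≠ b) (u : ℝ) :
    ∫ x in 0..u, exp (a * x) * exp (b * (u - x)) = (exp (a * u) - exp (b * u)) / (a - b) := by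
  have hsplit : ∀ x, exp (a * x) * exp (b * (u - x)) = exp (b * u) * exp ((a - b) * x) := by
    intro x; rw [← exp_add, ← exp_add]; ring_nf
  simp_rw [hsplit, intervalIntegral.integral_const_mul,
    intervalIntegral_exp_mul (sub_ne_zero.2 hab)]
  rw [mul_div_assoc', mul_sub, ← exp_add]; ring_nf

theorem setIntegral_eq_setIntegral_slices {α β : Type*} [MeasureSpace α] [MeasureSpace β]
    [SFinite (volume : Measure α)] [SFinite (volume : Measure β)]
    {S : Set (α × β)} (hS : MeasurableSet S) {f : α × β → ℝ} (hf : IntegrableOn f S)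
    {I : Set α} (hI : MeasurableSet I) (hSI : ∀ p ∈ S, p.1 ∈ I) :
    ∫ p in S, f p = ∫ x in I, ∫ y in Prod.mk x ⁻¹' S, f (x, y) := by
  rw [← integral_indicator hS, Measure.volume_eq_prod,
    integral_prod _ ((integrable_indicator_iff hS).2 hf), ← integral_indicator hI]
  congr 1 with x
  by_cases hx : x ∈ I
  · rw [indicator_of_mem hx, ← integral_indicator (measurable_prodMk_left hS)]
    rfl
  · rw [indicator_of_notMem hx]
    refine integral_eq_zero_of_ae (.of_forall fun y => indicator_of_notMem ?_ _)
    exact fun hxy => hx (hSI _ hxy)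

def simplex2 (u : ℝ) : Set (ℝ × ℝ) := {p | 0 ≤ p.1 ∧ 0 ≤ p.2 ∧ p.1 + p.2 ≤ u}

def simplex3 (u : ℝ) : Set (ℝ × ℝ × ℝ) :=
  {p | 0 ≤ p.1 ∧ 0 ≤ p.2.1 ∧ 0 ≤ p.2.2 ∧ p.1 + p.2.1 + p.2.2 ≤ u}

theorem isClosed_simplex2 (u : ℝ) : IsClosed (simplex2 u) :=
  (isClosed_le continuous_const continuous_fst).inter <|
    (isClosed_le continuous_const continuous_snd).inter <|
      isClosed_le (continuous_fst.add continuous_snd) continuous_const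

theorem isClosed_simplex3 (u : ℝ) : IsClosed (simplex3 u) :=
  (isClosed_le continuous_const continuous_fst).inter <|
    (isClosed_le continuous_const continuous_snd.fst).inter <|
      (isClosed_le continuous_const continuous_snd.snd).inter <|
        isClosed_le ((continuous_fst.add continuous_snd.fst).add continuous_snd.snd)
          continuous_const

theorem isCompact_simplex2 (u : ℝ) : IsCompact (simplex2 u) :=
  (isCompact_Icc (a := (0, 0)) (b := (u, u))).of_isClosed_subset (isClosed_simplex2 u)
    fun _ ⟨h1, h2, h3⟩ => ⟨⟨h1, h2⟩, by constructor <;> dsimp <;> linarith⟩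

theorem isCompact_simplex3 (u : ℝ) : IsCompact (simplex3 u) :=
  (isCompact_Icc (a := (0, 0, 0)) (b := (u, u, u))).of_isClosed_subset (isClosed_simplex3 u)
    fun _ ⟨h1, h2, h3, h4⟩ => ⟨⟨h1, h2, h3⟩, by refine ⟨?_, ?_, ?_⟩ <;> dsimp <;> linarith⟩

theorem preimage_mk_simplex2 {u x : ℝ} (hx : 0 ≤ x) :
    Prod.mk x ⁻¹' simplex2 u = Icc 0 (u - x) := by
  ext y; simp only [simplex2, mem_preimage, mem_ofPred_eq, mem_Icc]
  constructor
  · rintro ⟨-, hy, hxy⟩; exact ⟨hy, by linarith⟩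
  · rintro ⟨hy, hxy⟩; exact ⟨hx, hy, by linarith⟩

theorem preimage_mk_simplex3 {u x : ℝ} (hx : 0 ≤ x) :
    Prod.mk x ⁻¹' simplex3 u = simplex2 (u - x) := by
  ext q; simp only [simplex2, simplex3, mem_preimage, mem_ofPred_eq]
  constructor
  · rintro ⟨-, hy, hz, hxyz⟩; exact ⟨hy, hz, by linarith⟩
  · rintro ⟨hy, hz, hyz⟩; exact ⟨hx, hy, hz, by linarith⟩

theorem fst_mem_Icc_of_mem_simplex2 {u : ℝ} {p : ℝ × ℝ} (hp : p ∈ simplex2 u) : p.1 ∈ Icc 0 u :=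
  ⟨hp.1, by linarith [hp.2.1, hp.2.2]⟩

theorem fst_mem_Icc_of_mem_simplex3 {u : ℝ} {p : ℝ × ℝ × ℝ} (hp : p ∈ simplex3 u) :
    p.1 ∈ Icc 0 u :=
  ⟨hp.1, by linarith [hp.2.1, hp.2.2.1, hp.2.2.2]⟩

theorem volume_simplex3_pos {u : ℝ} (hu : 0 < u) : 0 < volume (simplex3 u) := by
  let U : Set (ℝ × ℝ × ℝ) := {p | 0 < p.1 ∧ 0 < p.2.1 ∧ 0 < p.2.2 ∧ p.1 + p.2.1 + p.2.2 < u}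
  have hU : IsOpen U :=
    (isOpen_lt continuous_const continuous_fst).inter <|
      (isOpen_lt continuous_const continuous_snd.fst).inter <|
        (isOpen_lt continuous_const continuous_snd.snd).inter <|
          isOpen_lt ((continuous_fst.add continuous_snd.fst).add continuous_snd.snd)
            continuous_const
  have hUne : U.Nonempty :=
    ⟨(u / 4, u / 4, u / 4), by refine ⟨?_, ?_, ?_, ?_⟩ <;> dsimp <;> linarith⟩
  exact (hU.measure_pos volume hUne).trans_le <| measure_mono
    fun p ⟨h1, h2, h3, h4⟩ => ⟨h1.le, h2.le, h3.le, h4.le⟩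

theorem setIntegral_simplex2 {f : ℝ × ℝ → ℝ} (hf : Continuous f) {u : ℝ} (hu : 0 ≤ u) :
    ∫ p in simplex2 u, f p = ∫ x in 0..u, ∫ y in 0..(u - x), f (x, y) := by
  rw [setIntegral_eq_setIntegral_slices (isClosed_simplex2 u).measurableSet
    (hf.continuousOn.integrableOn_compact (isCompact_simplex2 u)) measurableSet_Icc
    fun _ => fst_mem_Icc_of_mem_simplex2, integral_Icc_eq_integral_Ioc,
    ← intervalIntegral.integral_of_le hu]
  refine intervalIntegral.integral_congr fun x hx => ?_
  rw [uIcc_of_le hu] at hx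
  rw [preimage_mk_simplex2 hx.1, integral_Icc_eq_integral_Ioc,
    ← intervalIntegral.integral_of_le (sub_nonneg.2 hx.2)]

theorem setIntegral_simplex3 {f : ℝ × ℝ × ℝ → ℝ} (hf : Continuous f) {u : ℝ} (hu : 0 ≤ u) :
    ∫ p in simplex3 u, f p = ∫ x in 0..u, ∫ q in simplex2 (u - x), f (x, q) := by
  rw [setIntegral_eq_setIntegral_slices (isClosed_simplex3 u).measurableSet
    (hf.continuousOn.integrableOn_compact (isCompact_simplex3 u)) measurableSet_Icc
    fun _ => fst_mem_Icc_of_mem_simplex3, integral_Icc_eq_integral_Ioc,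
    ← intervalIntegral.integral_of_le hu]
  refine intervalIntegral.integral_congr fun x hx => ?_
  rw [uIcc_of_le hu] at hx
  simp only [preimage_mk_simplex3 hx.1]

theorem integral_exp_simplex2 {a b : ℝ} (ha : a ≠ 0) (hb : b ≠ 0) (hab : a ≠ b) {u : ℝ}
    (hu : 0 ≤ u) :
    ∫ p in simplex2 u, exp (a * p.1 + b * p.2) =
      (b * exp (a * u) - a * exp (b * u) + a - b) / (a * b * (a - b)) := by
  calc ∫ p in simplex2 u, exp (a * p.1 + b * p.2)
      = ∫ x in 0..u, (exp (a * x) * exp (b * (u - x)) - exp (a * x)) / b := by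
        rw [setIntegral_simplex2 (by fun_prop) hu]
        refine intervalIntegral.integral_congr fun x _ => ?_
        simp only [exp_add, intervalIntegral.integral_const_mul, intervalIntegral_exp_mul hb]
        ring
    _ = ((exp (a * u) - exp (b * u)) / (a - b) - (exp (a * u) - 1) / a) / b := by
        rw [intervalIntegral.integral_div, intervalIntegral.integral_sub
          (Continuous.intervalIntegrable (by fun_prop) _ _)
          (Continuous.intervalIntegrable (by fun_prop) _ _),
          intervalIntegral_exp_mul_mul_exp_mul_sub hab, intervalIntegral_exp_mul ha]
    _ = _ := by
        field_simp [sub_ne_zero.2 hab]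
        ring

theorem integral_exp_simplex3 {a b c : ℝ} (ha : a ≠ 0) (hb : b ≠ 0) (hc : c ≠ 0) (hab : a ≠ b)
    (hac : a ≠ c) (hbc : b ≠ c) {u : ℝ} (hu : 0 ≤ u) :
    ∫ p in simplex3 u, exp (a * p.1 + b * p.2.1 + c * p.2.2) =
      (a * b * (b - a) * exp (c * u) + a * c * (a - c) * exp (b * u) +
          c * b * (c - b) * exp (a * u) + (b - a) * (a - c) * (c - b)) /
        (a * b * c * (a - b) * (b - c) * (c - a)) := by
  have hintegrable : ∀ k : ℝ,
      IntervalIntegrable (fun x => exp (a * x) * exp (k * (u - x))) volume 0 u :=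
    fun k => Continuous.intervalIntegrable (by fun_prop) _ _
  calc ∫ p in simplex3 u, exp (a * p.1 + b * p.2.1 + c * p.2.2)
      = ∫ x in 0..u, (c * (exp (a * x) * exp (b * (u - x))) -
          b * (exp (a * x) * exp (c * (u - x))) + (b - c) * exp (a * x)) / (b * c * (b - c)) := by
        rw [setIntegral_simplex3 (by fun_prop) hu]
        refine intervalIntegral.integral_congr fun x hx => ?_
        rw [uIcc_of_le hu] at hx
        have hsplit : ∀ q : ℝ × ℝ,
            exp (a * x + b * q.1 + c * q.2) = exp (a * x) * exp (b * q.1 + c * q.2) := by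
          intro q; rw [add_assoc, exp_add]
        simp only [hsplit, integral_const_mul, integral_exp_simplex2 hb hc hbc (sub_nonneg.2 hx.2)]
        field_simp [sub_ne_zero.2 hbc]
        ring
    _ = (c * ((exp (a * u) - exp (b * u)) / (a - b)) - b * ((exp (a * u) - exp (c * u)) / (a - c))
          + (b - c) * ((exp (a * u) - 1) / a)) / (b * c * (b - c)) := by
        rw [intervalIntegral.integral_div, intervalIntegral.integral_add
          (((hintegrable b).const_mul c).sub ((hintegrable c).const_mul b))
          (Continuous.intervalIntegrable (by fun_prop) _ _),
          intervalIntegral.integral_sub ((hintegrable b).const_mul c)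
            ((hintegrable c).const_mul b)]
        simp only [intervalIntegral.integral_const_mul, intervalIntegral_exp_mul ha,
          intervalIntegral_exp_mul_mul_exp_mul_sub hab,
          intervalIntegral_exp_mul_mul_exp_mul_sub hac]
    _ = _ := by
        field_simp [sub_ne_zero.2 hab, sub_ne_zero.2 hac, sub_ne_zero.2 hbc,
          sub_ne_zero.2 hac.symm]
        ring

theorem setIntegral_exp_simplex3_pos {g : ℝ × ℝ × ℝ → ℝ} (hg : Continuous g) {u : ℝ}
    (hu : 0 < u) : 0 < ∫ p in simplex3 u, exp (g p) := by
  have : NeZero (volume.restrict (simplex3 u)) :=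
    ⟨Measure.restrict_eq_zero.not.2 (volume_simplex3_pos hu).ne'⟩
  exact integral_exp_pos (hg.rexp.continuousOn.integrableOn_compact (isCompact_simplex3 u))

/-- closed form of the 3D Bernoulli function, (A.1c)/(A.4):
for `ε > 0` and pairwise distinct nonzero `s, t, r`, the quantity
`Δ = s t (t−s) e^{r/ε} + s r (s−r) e^{t/ε} + r t (r−t) e^{s/ε} + (t−s)(s−r)(r−t)`
is nonzero, and
`B₃^ε(s,t,r) = ε (2 ∬_{Δ₂} e^{(s x₁ + t x₂)/ε}) / (6 ∭_{Δ₃} e^{(s x₁ + t x₂ + r x₃)/ε})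
            = −r (s−r)(r−t)(s e^{t/ε} − t e^{s/ε} + t − s) / (3 Δ)`,
where `Δ₂` and `Δ₃` are the unit 2- and 3-simplexes. -/
theorem stmt_10 (ε s t r : ℝ) (hε : 0 < ε) (hs : s ≠ 0) (ht : t ≠ 0) (hr : r ≠ 0)
    (hst : s ≠ t) (hsr : s ≠ r) (htr : t ≠ r) :
    s * t * (t - s) * Real.exp (r / ε) + s * r * (s - r) * Real.exp (t / ε) +
        r * t * (r - t) * Real.exp (s / ε) + (t - s) * (s - r) * (r - t) ≠ 0 ∧
    ε * (2 * ∫ p in {p : ℝ × ℝ | 0 ≤ p.1 ∧ 0 ≤ p.2 ∧ p.1 + p.2 ≤ 1},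
          Real.exp ((s * p.1 + t * p.2) / ε)) /
        (6 * ∫ p in {p : ℝ × ℝ × ℝ |
            0 ≤ p.1 ∧ 0 ≤ p.2.1 ∧ 0 ≤ p.2.2 ∧ p.1 + p.2.1 + p.2.2 ≤ 1},
          Real.exp ((s * p.1 + t * p.2.1 + r * p.2.2) / ε)) =
      -r * (s - r) * (r - t) *
          (s * Real.exp (t / ε) - t * Real.exp (s / ε) + t - s) /
        (3 * (s * t * (t - s) * Real.exp (r / ε) + s * r * (s - r) * Real.exp (t / ε) +
          r * t * (r - t) * Real.exp (s / ε) + (t - s) * (s - r) * (r - t))) := by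
  have hε0 : ε ≠ 0 := hε.ne'
  have hdiv : ∀ {x y : ℝ}, x ≠ y → x / ε ≠ y / ε := fun h h' => h ((div_left_inj' hε0).1 h')
  have hexp2 : (fun p : ℝ × ℝ => exp ((s * p.1 + t * p.2) / ε)) =
      fun p => exp (s / ε * p.1 + t / ε * p.2) := by
    ext p; ring_nf
  have hexp3 : (fun p : ℝ × ℝ × ℝ => exp ((s * p.1 + t * p.2.1 + r * p.2.2) / ε)) =
      fun p => exp (s / ε * p.1 + t / ε * p.2.1 + r / ε * p.2.2) := by
    ext p; ring_nf
  have hpos := setIntegral_exp_simplex3_pos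
    (g := fun p => s / ε * p.1 + t / ε * p.2.1 + r / ε * p.2.2) (by fun_prop) one_pos
  rw [← simplex2.eq_1, ← simplex3.eq_1, hexp2, hexp3,
    integral_exp_simplex2 (div_ne_zero hs hε0) (div_ne_zero ht hε0) (hdiv hst) zero_le_one]
  rw [integral_exp_simplex3 (div_ne_zero hs hε0) (div_ne_zero ht hε0) (div_ne_zero hr hε0)
    (hdiv hst) (hdiv hsr) (hdiv htr) zero_le_one] at hpos ⊢
  simp only [mul_one] at hpos ⊢
  have hΔ : s * t * (t - s) * exp (r / ε) + s * r * (s - r) * exp (t / ε) +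
      r * t * (r - t) * exp (s / ε) + (t - s) * (s - r) * (r - t) ≠ 0 := by
    have hΔε := (div_ne_zero_iff.1 hpos.ne').1
    contrapose! hΔε
    field_simp
    linear_combination hΔε
  refine ⟨hΔ, ?_⟩
  field_simp
  ring
end

section
/- Let s, t ∈ ℝ with s ≠ 0, t ≠ 0 and s ≠ t, and for ε > 0 set B₂^ε(s,t) := t·(t−s)·(exp(s/ε) − 1) / (2·(s·exp(t/ε) − t·exp(s/ε) + t − s)). Then as ε → 0⁺, B₂^ε(s,t) converges to B₂⁰(s,t), where B₂⁰(s,t) = (s−t)/2 if s > t and s > 0; B₂⁰(s,t) = 0 if t > s and t > 0; and B₂⁰(s,t) = −t/2 if s < 0 and t < 0. (Limiting case (A.3) of the two-dimensional Bernoulli function as the diffusion coefficient vanishes.) -/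
/-!
Put `x = 1/ε → ∞`. If `s, t < 0` every exponential decays and the quotient tends to
`t (t - s) (-1) / (2 (t - s)) = -t/2`. Otherwise divide numerator and denominator by
`exp (m x)` with `m = max s t > 0`: afterwards every exponential decays, and only the constant
terms `t (t - s) · [m = s]` and `2 (s [m = t] - t [m = s])` survive.
-/

open Filter Topology Real

lemma tendsto_exp_mul_atTop_nhds_zero {c : ℝ} (hc : c < 0) :
    Tendsto (fun x : ℝ => exp (c * x)) atTop (𝓝 0) :=
  tendsto_exp_comp_nhds_zero.2 (tendsto_id.const_mul_atTop_of_neg hc)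

/-- `B₂^ε(s, t)` written in the variable `x = 1/ε`. -/
noncomputable def bernoulliTwo (s t x : ℝ) : ℝ :=
  t * (t - s) * (exp (s * x) - 1) / (2 * (s * exp (t * x) - t * exp (s * x) + t - s))

lemma tendsto_bernoulliTwo_of_neg {s t : ℝ} (hs : s < 0) (ht : t < 0) (hst : s ≠ t) :
    Tendsto (bernoulliTwo s t) atTop (𝓝 (-t / 2)) := by
  have hts : t - s ≠ 0 := sub_ne_zero.2 hst.symm
  have hnum : Tendsto (fun x => t * (t - s) * (exp (s * x) - 1)) atTop
      (𝓝 (t * (t - s) * (0 - 1))) :=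
    ((tendsto_exp_mul_atTop_nhds_zero hs).sub_const 1).const_mul _
  have hden : Tendsto (fun x => 2 * (s * exp (t * x) - t * exp (s * x) + t - s)) atTop
      (𝓝 (2 * (s * 0 - t * 0 + t - s))) :=
    (((((tendsto_exp_mul_atTop_nhds_zero ht).const_mul s).sub
      ((tendsto_exp_mul_atTop_nhds_zero hs).const_mul t)).add_const t).sub_const s).const_mul 2
  rw [show -t / 2 = t * (t - s) * (0 - 1) / (2 * (s * 0 - t * 0 + t - s)) by simp; field_simp]
  exact hnum.div hden (by simpa using hts)

lemma tendsto_bernoulliTwo_of_lt_of_pos {s t : ℝ} (hs : s ≠ 0) (hst : s < t) (ht : 0 < t) :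
    Tendsto (bernoulliTwo s t) atTop (𝓝 0) := by
  have hrescale : ∀ x, bernoulliTwo s t x =
      t * (t - s) * (exp ((s - t) * x) - exp (-t * x)) /
        (2 * (s - t * exp ((s - t) * x) + (t - s) * exp (-t * x))) := by
    intro x
    simp only [bernoulliTwo, sub_mul, neg_mul, exp_sub, exp_neg]
    field_simp
    ring
  have hnum : Tendsto (fun x => t * (t - s) * (exp ((s - t) * x) - exp (-t * x))) atTop
      (𝓝 (t * (t - s) * (0 - 0))) :=
    ((tendsto_exp_mul_atTop_nhds_zero (by linarith)).sub
      (tendsto_exp_mul_atTop_nhds_zero (by linarith))).const_mul _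
  have hden : Tendsto (fun x => 2 * (s - t * exp ((s - t) * x) + (t - s) * exp (-t * x)))
      atTop (𝓝 (2 * (s - t * 0 + (t - s) * 0))) :=
    (((tendsto_exp_mul_atTop_nhds_zero (by linarith)).const_mul t).const_sub s |>.add
      ((tendsto_exp_mul_atTop_nhds_zero (by linarith)).const_mul (t - s))).const_mul 2
  rw [funext hrescale,
    show (0 : ℝ) = t * (t - s) * (0 - 0) / (2 * (s - t * 0 + (t - s) * 0)) by simp]
  exact hnum.div hden (by simpa using hs)

lemma tendsto_bernoulliTwo_of_gt_of_pos {s t : ℝ} (ht : t ≠ 0) (hts : t < s) (hs : 0 < s) :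
    Tendsto (bernoulliTwo s t) atTop (𝓝 ((s - t) / 2)) := by
  have hrescale : ∀ x, bernoulliTwo s t x =
      t * (t - s) * (1 - exp (-s * x)) /
        (2 * (s * exp ((t - s) * x) - t + (t - s) * exp (-s * x))) := by
    intro x
    simp only [bernoulliTwo, sub_mul, neg_mul, exp_sub, exp_neg]
    field_simp
    ring
  have hnum : Tendsto (fun x => t * (t - s) * (1 - exp (-s * x))) atTop
      (𝓝 (t * (t - s) * (1 - 0))) :=
    ((tendsto_exp_mul_atTop_nhds_zero (by linarith)).const_sub 1).const_mul _
  have hden : Tendsto (fun x => 2 * (s * exp ((t - s) * x) - t + (t - s) * exp (-s * x)))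
      atTop (𝓝 (2 * (s * 0 - t + (t - s) * 0))) :=
    ((((tendsto_exp_mul_atTop_nhds_zero (by linarith)).const_mul s).sub_const t).add
      ((tendsto_exp_mul_atTop_nhds_zero (by linarith)).const_mul (t - s))).const_mul 2
  rw [funext hrescale,
    show (s - t) / 2 = t * (t - s) * (1 - 0) / (2 * (s * 0 - t + (t - s) * 0)) by
      simp; field_simp; ring]
  exact hnum.div hden (by simpa using ht)

/-- limit (A.3): for `s ≠ 0`, `t ≠ 0`, `s ≠ t`, as `ε → 0⁺`,
`B₂^ε(s,t) = t(t−s)(e^{s/ε} − 1) / (2(s e^{t/ε} − t e^{s/ε} + t − s))` tends to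
`B₂⁰(s,t)`, which is `(s−t)/2` if `s = max{s,t} > 0`, `0` if `t = max{s,t} > 0`,
and `−t/2` if `s < 0` and `t < 0` (these cases being exhaustive and mutually
exclusive under the stated hypotheses). -/
theorem stmt_12 (s t : ℝ) (hs : s ≠ 0) (ht : t ≠ 0) (hst : s ≠ t) :
    Tendsto
      (fun ε : ℝ =>
        t * (t - s) * (Real.exp (s / ε) - 1) /
          (2 * (s * Real.exp (t / ε) - t * Real.exp (s / ε) + t - s)))
      (nhdsWithin 0 (Set.Ioi 0))
      (nhds (if t < s ∧ 0 < s then (s - t) / 2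
        else if s < t ∧ 0 < t then 0
        else -t / 2)) := by
  have hlim : Tendsto (bernoulliTwo s t) atTop (𝓝 (if t < s ∧ 0 < s then (s - t) / 2
      else if s < t ∧ 0 < t then 0 else -t / 2)) := by
    split_ifs with h₁ h₂
    · exact tendsto_bernoulliTwo_of_gt_of_pos ht h₁.1 h₁.2
    · exact tendsto_bernoulliTwo_of_lt_of_pos hs h₂.1 h₂.2
    · have hs' : s < 0 := by grind
      have ht' : t < 0 := by grind
      exact tendsto_bernoulliTwo_of_neg hs' ht' hst
  simpa [Function.comp_def, bernoulliTwo, div_eq_mul_inv] using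
    hlim.comp tendsto_inv_nhdsGT_zero
end

section
/- Let s, t, r ∈ ℝ be pairwise distinct and all nonzero, and for ε > 0 set B₃^ε(s,t,r) := −r·(s−r)·(r−t)·(s·exp(t/ε) − t·exp(s/ε) + t − s) / (3·(s·t·(t−s)·exp(r/ε) + s·r·(s−r)·exp(t/ε) + r·t·(r−t)·exp(s/ε) + (t−s)·(s−r)·(r−t))). Then as ε → 0⁺, B₃^ε(s,t,r) converges to B₃⁰(s,t,r), where B₃⁰(s,t,r) = (s−r)/3 if s = max{s,t,r} and s > 0; B₃⁰(s,t,r) = (t−r)/3 if t = max{s,t,r} and t > 0; B₃⁰(s,t,r) = 0 if r = max{s,t,r} and r > 0; and B₃⁰(s,t,r) = −r/3 if s < 0, t < 0 and r < 0. (Limiting case (A.4) of the three-dimensional Bernoulli function as the diffusion coefficient vanishes.) -/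
/-!
Put `x = 1/ε → ∞`. Numerator and denominator of `B₃^ε` are then linear combinations of
`e^{s x}, e^{t x}, e^{r x}, e^{0 x}`. Dividing both by `e^{M x}` with `M = max {s, t, r, 0}`, every
term except the one with exponent `M` decays, so the limit is the quotient of the two coefficients
of `e^{M x}`; the four cases of `B₃⁰` are the four possible positions of `M`.
-/

open Filter Topology

theorem tendsto_sum_mul_exp_div_exp_atTop {ι : Type*} [Fintype ι] (a c : ι → ℝ) {j : ι}
    (hj : ∀ i ≠ j, a i < a j) :
    Tendsto (fun x => (∑ i, c i * Real.exp (a i * x)) / Real.exp (a j * x)) atTop (𝓝 (c j)) := by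
  classical
  have hterm : ∀ i, Tendsto (fun x => c i * Real.exp ((a i - a j) * x)) atTop
      (𝓝 (if i = j then c j else 0)) := by
    intro i
    split_ifs with hij
    · subst hij; simp
    · have : Tendsto (fun x => (a i - a j) * x) atTop atBot :=
        tendsto_id.const_mul_atTop_of_neg (sub_neg.2 (hj i hij))
      simpa using (Real.tendsto_exp_atBot.comp this).const_mul (c i)
  have hsum := tendsto_finsetSum Finset.univ fun i _ => hterm i
  rw [Finset.sum_ite_eq' Finset.univ j, if_pos (Finset.mem_univ j)] at hsum
  refine hsum.congr fun x => ?_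
  rw [Finset.sum_div]
  refine Finset.sum_congr rfl fun i _ => ?_
  rw [sub_mul, Real.exp_sub, mul_div_assoc]

theorem tendsto_sum_mul_exp_div_sum_mul_exp_atTop {ι : Type*} [Fintype ι] (a c d : ι → ℝ)
    {j : ι} (hj : ∀ i ≠ j, a i < a j) (hd : d j ≠ 0) :
    Tendsto (fun x => (∑ i, c i * Real.exp (a i * x)) / ∑ i, d i * Real.exp (a i * x))
      atTop (𝓝 (c j / d j)) :=
  ((tendsto_sum_mul_exp_div_exp_atTop a c hj).div
    (tendsto_sum_mul_exp_div_exp_atTop a d hj) hd).congr fun _ =>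
    div_div_div_cancel_right₀ (Real.exp_pos _).ne' _ _

theorem tendsto_bernoulli3_of_dominant (s t r : ℝ) (hs : s ≠ 0) (ht : t ≠ 0) (hr : r ≠ 0)
    (hst : s ≠ t) (hsr : s ≠ r) (htr : t ≠ r) (j : Fin 4)
    (hj : ∀ i ≠ j, ![s, t, r, 0] i < ![s, t, r, 0] j) :
    Tendsto
      (fun ε : ℝ =>
        -r * (s - r) * (r - t) *
            (s * Real.exp (t / ε) - t * Real.exp (s / ε) + t - s) /
          (3 * (s * t * (t - s) * Real.exp (r / ε) +
            s * r * (s - r) * Real.exp (t / ε) +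
            r * t * (r - t) * Real.exp (s / ε) + (t - s) * (s - r) * (r - t))))
      (𝓝[>] 0)
      (𝓝 (![r * (s - r) * (r - t) * t, -r * (s - r) * (r - t) * s, 0,
              -r * (s - r) * (r - t) * (t - s)] j /
            ![3 * (r * t * (r - t)), 3 * (s * r * (s - r)), 3 * (s * t * (t - s)),
              3 * ((t - s) * (s - r) * (r - t))] j)) := by
  have hd : ![3 * (r * t * (r - t)), 3 * (s * r * (s - r)), 3 * (s * t * (t - s)),
      3 * ((t - s) * (s - r) * (r - t))] j ≠ 0 := by
    have := sub_ne_zero.2 hst; have := sub_ne_zero.2 hsr; have := sub_ne_zero.2 htr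
    fin_cases j <;> simp <;> grind
  refine ((tendsto_sum_mul_exp_div_sum_mul_exp_atTop _ _ _ hj hd).comp
    tendsto_inv_nhdsGT_zero).congr fun ε => ?_
  simp only [Function.comp_apply, Fin.sum_univ_four, Matrix.cons_val, zero_mul, Real.exp_zero,
    mul_one]
  congr 1 <;> ring_nf

theorem all_neg_of_not_pos_max (s t r : ℝ) (hs : s ≠ 0) (ht : t ≠ 0) (hr : r ≠ 0)
    (hst : s ≠ t) (hsr : s ≠ r) (htr : t ≠ r) (h₁ : ¬ (t < s ∧ r < s ∧ 0 < s))
    (h₂ : ¬ (s < t ∧ r < t ∧ 0 < t)) (h₃ : ¬ (s < r ∧ t < r ∧ 0 < r)) :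
    s < 0 ∧ t < 0 ∧ r < 0 := by
  rcases hst.lt_or_gt with h | h <;> rcases htr.lt_or_gt with h' | h' <;>
    rcases hsr.lt_or_gt with h'' | h'' <;> grind

/-- limit (A.4): for pairwise distinct nonzero `s, t, r`, as `ε → 0⁺`,
`B₃^ε(s,t,r) = −r(s−r)(r−t)(s e^{t/ε} − t e^{s/ε} + t − s) /
  (3(s t (t−s) e^{r/ε} + s r (s−r) e^{t/ε} + r t (r−t) e^{s/ε} + (t−s)(s−r)(r−t)))`
tends to `B₃⁰(s,t,r)`, which is `(s−r)/3` if `s = max{s,t,r} > 0`, `(t−r)/3` if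
`t = max{s,t,r} > 0`, `0` if `r = max{s,t,r} > 0`, and `−r/3` if `s, t, r < 0`
(these cases being exhaustive and mutually exclusive under the stated hypotheses). -/
theorem stmt_13 (s t r : ℝ) (hs : s ≠ 0) (ht : t ≠ 0) (hr : r ≠ 0)
    (hst : s ≠ t) (hsr : s ≠ r) (htr : t ≠ r) :
    Tendsto
      (fun ε : ℝ =>
        -r * (s - r) * (r - t) *
            (s * Real.exp (t / ε) - t * Real.exp (s / ε) + t - s) /
          (3 * (s * t * (t - s) * Real.exp (r / ε) +
            s * r * (s - r) * Real.exp (t / ε) +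
            r * t * (r - t) * Real.exp (s / ε) + (t - s) * (s - r) * (r - t))))
      (nhdsWithin 0 (Set.Ioi 0))
      (nhds (if t < s ∧ r < s ∧ 0 < s then (s - r) / 3
        else if s < t ∧ r < t ∧ 0 < t then (t - r) / 3
        else if s < r ∧ t < r ∧ 0 < r then 0
        else -r / 3)) := by
  have hts := sub_ne_zero.2 hst.symm
  have hsr' := sub_ne_zero.2 hsr
  have hrt := sub_ne_zero.2 htr.symm
  have key := tendsto_bernoulli3_of_dominant s t r hs ht hr hst hsr htr
  split_ifs with h₁ h₂ h₃
  · convert key 0 (fun i hi => by fin_cases i <;> simp at hi ⊢ <;> linarith) using 2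
    simp only [Matrix.cons_val]
    field_simp
  · convert key 1 (fun i hi => by fin_cases i <;> simp at hi ⊢ <;> linarith) using 2
    simp only [Matrix.cons_val]
    field_simp
    ring
  · convert key 2 (fun i hi => by fin_cases i <;> simp at hi ⊢ <;> linarith) using 2
    simp
  · obtain ⟨hs₀, ht₀, hr₀⟩ := all_neg_of_not_pos_max s t r hs ht hr hst hsr htr h₁ h₂ h₃
    convert key 3 (fun i hi => by fin_cases i <;> simp at hi ⊢ <;> linarith) using 2
    simp only [Matrix.cons_val]
    field_simp
end
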